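/- For all modal trees T, T', if T ↪ T' (one rewriting step in TRC), then ℱ(T) ⊢ ℱ(T') is derivable in RC. -/

import Mathlib

/-! Each rule applied at the root is an RC-derivation between the embedded formulas: ρ, σ and π are
conjunction bookkeeping, 𝔣4 is transitivity `⟨β⟩⟨β⟩φ ⊢ ⟨β⟩φ`, λ is monotonicity and J is the
J-axiom followed by distribution of `⟨α⟩`. A step at an inner position then lifts to the whole tree,
because `ℱ` is built from `∧` and `⟨α⟩`, both of which are monotone in RC. -/

namespace TRC

/-- Strictly positive formulas of `L⁺`. -/
inductive SPF : Type where
  | top : SPF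
  | var : ℕ → SPF
  | dia : ℕ → SPF → SPF
  | and : SPF → SPF → SPF

/-- The sequent system `K⁺`. -/
inductive KPlus : SPF → SPF → Prop where
  | id (φ) : KPlus φ φ
  | topI (φ) : KPlus φ .top
  | cut {φ ψ χ} : KPlus φ ψ → KPlus ψ χ → KPlus φ χ
  | andE₁ (φ ψ) : KPlus (.and φ ψ) φ
  | andE₂ (φ ψ) : KPlus (.and φ ψ) ψ
  | andI {φ ψ χ} : KPlus φ ψ → KPlus φ χ → KPlus φ (.and ψ χ)
  | dist {φ ψ} (α) : KPlus φ ψ → KPlus (.dia α φ) (.dia α ψ)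

/-- The Reflection Calculus `RC`. -/
inductive RC : SPF → SPF → Prop where
  | id (φ) : RC φ φ
  | topI (φ) : RC φ .top
  | cut {φ ψ χ} : RC φ ψ → RC ψ χ → RC φ χ
  | andE₁ (φ ψ) : RC (.and φ ψ) φ
  | andE₂ (φ ψ) : RC (.and φ ψ) ψ
  | andI {φ ψ χ} : RC φ ψ → RC φ χ → RC φ (.and ψ χ)
  | dist {φ ψ} (α) : RC φ ψ → RC (.dia α φ) (.dia α ψ)
  | trans (α φ) : RC (.dia α (.dia α φ)) (.dia α φ)
  | mono {α β} (φ) : β < α → RC (.dia α φ) (.dia β φ)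
  | jax {α β} (φ ψ) : β < α → RC (.and (.dia α φ) (.dia β ψ)) (.dia α (.and φ (.dia β ψ)))

/-- Modal depth. -/
def SPF.md : SPF → ℕ
  | .top => 0
  | .var _ => 0
  | .dia _ φ => φ.md + 1
  | .and φ ψ => max φ.md ψ.md

/-- Modal trees. -/
inductive MTree : Type where
  | node : List ℕ → List (ℕ × MTree) → MTree

/-- Sum of modal trees. -/
def MTree.sum : MTree → MTree → MTree
  | .node Δ₁ Γ₁, .node Δ₂ Γ₂ => .node (Δ₁ ++ Δ₂) (Γ₁ ++ Γ₂)

mutual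
/-- Height of a modal tree. -/
def MTree.height : MTree → ℕ
  | .node _ Γ => heightL Γ
def heightL : List (ℕ × MTree) → ℕ
  | [] => 0
  | (_, S) :: Γ => max (S.height + 1) (heightL Γ)
end

mutual
/-- `T.IsPos k`: the (1-indexed) string `k` is a position of `T`. -/
def MTree.IsPos : MTree → List ℕ → Prop
  | _, [] => True
  | .node _ Γ, i :: k => isPosL Γ i k
def isPosL : List (ℕ × MTree) → ℕ → List ℕ → Prop
  | [], _, _ => False
  | _ :: _, 0, _ => False
  | (_, S) :: _, 1, k => S.IsPos k
  | _ :: Γ, n+2, k => isPosL Γ (n+1) k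
end

mutual
/-- Subtree of `T` at position `k` (returning a default junk value off positions). -/
def MTree.subtree : MTree → List ℕ → MTree
  | T, [] => T
  | .node Δ Γ, i :: k => subtreeL (.node Δ Γ) Γ i k
def subtreeL : MTree → List (ℕ × MTree) → ℕ → List ℕ → MTree
  | d, [], _, _ => d
  | d, _ :: _, 0, _ => d
  | _, (_, S) :: _, 1, k => S.subtree k
  | d, _ :: Γ, n+2, k => subtreeL d Γ (n+1) k
end

mutual
/-- `T.replace S k`: replace the subtree of `T` at position `k` by `S`. -/
def MTree.replace : MTree → MTree → List ℕ → MTree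
  | _, S, [] => S
  | .node Δ Γ, S, i :: k => .node Δ (replaceL Γ S i k)
def replaceL : List (ℕ × MTree) → MTree → ℕ → List ℕ → List (ℕ × MTree)
  | [], _, _, _ => []
  | Γ, _, 0, _ => Γ
  | (α, C) :: Γ, S, 1, k => (α, C.replace S k) :: Γ
  | x :: Γ, S, n+2, k => x :: replaceL Γ S (n+1) k
end

/-- Names of the eight rewriting rules of TRC. -/
inductive Rule : Type where
  | rhoP | rhoM | sigma | piP | piM | four | lam | jay
  deriving DecidableEq

/-- One rewriting step performed at the root. -/
inductive RootStep : Rule → MTree → MTree → Prop where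
  | rhoP {Δ Γ i p} (hi : 1 ≤ i) (h : Δ[i-1]? = some p) :
      RootStep .rhoP (.node Δ Γ) (.node (p :: Δ) Γ)
  | rhoM {Δ Γ i} (hi : 1 ≤ i) (h : i - 1 < Δ.length) :
      RootStep .rhoM (.node Δ Γ) (.node (Δ.eraseIdx (i-1)) Γ)
  | sigma {Δ Γ i j x y} (hi : 1 ≤ i) (hj : 1 ≤ j) (hij : i ≠ j)
      (hx : Γ[i-1]? = some x) (hy : Γ[j-1]? = some y) :
      RootStep .sigma (.node Δ Γ) (.node Δ ((Γ.set (j-1) x).set (i-1) y))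
  | piP {Δ Γ i x} (hi : 1 ≤ i) (hx : Γ[i-1]? = some x) :
      RootStep .piP (.node Δ Γ) (.node Δ (x :: Γ))
  | piM {Δ Γ i} (hi : 1 ≤ i) (h : i - 1 < Γ.length) :
      RootStep .piM (.node Δ Γ) (.node Δ (Γ.eraseIdx (i-1)))
  | four {Δ Γ i j β Δt Γt S} (hi : 1 ≤ i) (hj : 1 ≤ j)
      (hΓ : Γ[i-1]? = some (β, MTree.node Δt Γt)) (hΓt : Γt[j-1]? = some (β, S)) :
      RootStep .four (.node Δ Γ) (.node Δ (Γ.set (i-1) (β, S)))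
  | lam {Δ Γ i α β S} (hi : 1 ≤ i) (hβ : β < α) (hΓ : Γ[i-1]? = some (α, S)) :
      RootStep .lam (.node Δ Γ) (.node Δ (Γ.set (i-1) (β, S)))
  | jay {Δ Γ i j α β Δt Γt S} (hi : 1 ≤ i) (hj : 1 ≤ j) (hij : i ≠ j) (hβ : β < α)
      (hΓi : Γ[i-1]? = some (α, MTree.node Δt Γt)) (hΓj : Γ[j-1]? = some (β, S)) :
      RootStep .jay (.node Δ Γ)
        (.node Δ ((Γ.set (i-1) (α, MTree.node Δt (Γt ++ [(β, S)]))).eraseIdx (j-1)))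

/-- One step of the rule `r`, applied at some position. -/
def StepR (r : Rule) (T T' : MTree) : Prop :=
  ∃ k S, T.IsPos k ∧ RootStep r (T.subtree k) S ∧ T' = T.replace S k

/-- One step of the rewriting relation `↪`. -/
def Step (T T' : MTree) : Prop := ∃ r, StepR r T T'

/-- The rewriting relation `↪*`. -/
def Steps : MTree → MTree → Prop := Relation.ReflTransGen Step

/-- TRC-equivalence `↔*`. -/
def TEquiv (T T' : MTree) : Prop := Steps T T' ∧ Steps T' T

/-- `T ↪^Ω S` : rewriting applying the rules of `Ω` in order, one step each. -/
inductive StepsOf : List Rule → MTree → MTree → Prop where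
  | nil (T) : StepsOf [] T T
  | cons {r Ω T U S} : StepR r T U → StepsOf Ω U S → StepsOf (r :: Ω) T S

def AtomicStep (T S : MTree) : Prop := StepR .rhoP T S ∨ StepR .rhoM T S
def DecreasingStep (T S : MTree) : Prop := StepR .piM T S ∨ StepR .four T S
def ModalStep (T S : MTree) : Prop := StepR .lam T S ∨ StepR .jay T S

/-- Finite conjunctions (empty conjunction is `⊤`). -/
def bigAnd : List SPF → SPF
  | [] => .top
  | φ :: l => .and φ (bigAnd l)

mutual
/-- The embedding `ℱ` of modal trees into formulas. -/
def MTree.toFormula : MTree → SPF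
  | .node Δ Γ => .and (bigAnd (Δ.map SPF.var)) (diamL Γ)
def diamL : List (ℕ × MTree) → SPF
  | [] => .top
  | (α, S) :: Γ => .and (.dia α S.toFormula) (diamL Γ)
end

/-- The embedding `𝒯` of formulas into modal trees. -/
def SPF.toTree : SPF → MTree
  | .top => .node [] []
  | .var p => .node [p] []
  | .dia α φ => .node [] [(α, φ.toTree)]
  | .and φ ψ => φ.toTree.sum ψ.toTree

/-- Nonempty conjunction `φ₁ ∧ (φ₂ ∧ (… ∧ φₙ))`. -/
def conjNE : SPF → List SPF → SPF
  | φ, [] => φ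
  | φ, ψ :: l => .and φ (conjNE ψ l)

variable {φ φ' ψ ψ' X : SPF} {L L' : List SPF} {Γ Γ' : List (ℕ × MTree)}

theorem RC.and_congr (h₁ : RC φ φ') (h₂ : RC ψ ψ') : RC (.and φ ψ) (.and φ' ψ') :=
  .andI (.cut (.andE₁ _ _) h₁) (.cut (.andE₂ _ _) h₂)

theorem RC.bigAnd_intro (h : ∀ φ ∈ L, RC X φ) : RC X (bigAnd L) := by
  induction L with
  | nil => exact .topI _
  | cons φ L ih => exact .andI (h φ (.head _)) (ih fun ψ hψ => h ψ (.tail _ hψ))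

theorem RC.bigAnd_of_mem (h : φ ∈ L) : RC (bigAnd L) φ := by
  induction L with
  | nil => cases h
  | cons ψ L ih =>
    cases h with
    | head => exact .andE₁ _ _
    | tail _ h => exact .cut (.andE₂ _ _) (ih h)

theorem RC.bigAnd_mono (h : L' ⊆ L) : RC (bigAnd L) (bigAnd L') :=
  bigAnd_intro fun _ hφ => bigAnd_of_mem (h hφ)

def diaFormula : ℕ × MTree → SPF
  | (α, S) => .dia α S.toFormula

theorem diamL_eq_bigAnd (Γ : List (ℕ × MTree)) : diamL Γ = bigAnd (Γ.map diaFormula) := by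
  induction Γ with
  | nil => rfl
  | cons x Γ ih => rw [List.map_cons, bigAnd, ← ih]; rfl

theorem RC.diamL_intro (h : ∀ x ∈ Γ, RC X (diaFormula x)) : RC X (diamL Γ) := by
  rw [diamL_eq_bigAnd]
  exact bigAnd_intro (List.forall_mem_map.2 h)

theorem RC.diamL_of_mem {x : ℕ × MTree} (h : x ∈ Γ) : RC (diamL Γ) (diaFormula x) := by
  rw [diamL_eq_bigAnd]
  exact bigAnd_of_mem (List.mem_map_of_mem h)

theorem RC.diamL_of_mem_set {x y : ℕ × MTree} {n : ℕ} (hy : RC (diamL Γ) (diaFormula y))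
    (hx : x ∈ Γ.set n y) : RC (diamL Γ) (diaFormula x) :=
  (List.mem_or_eq_of_mem_set hx).elim diamL_of_mem fun h => h ▸ hy

theorem RC.toFormula_node {Δ Δ' : List ℕ} (hΔ : Δ' ⊆ Δ)
    (hΓ : ∀ x ∈ Γ', RC (diamL Γ) (diaFormula x)) :
    RC (MTree.node Δ Γ).toFormula (MTree.node Δ' Γ').toFormula :=
  and_congr (bigAnd_mono (List.map_subset _ hΔ)) (diamL_intro hΓ)

theorem RC.dia_node_trans {β : ℕ} {Δ : List ℕ} {S : MTree} (h : (β, S) ∈ Γ) :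
    RC (.dia β (MTree.node Δ Γ).toFormula) (.dia β S.toFormula) :=
  .cut (.dist β (.cut (.andE₂ _ _) (diamL_of_mem h))) (.trans β _)

theorem RC.dia_node_jax {α β : ℕ} {Δ : List ℕ} {S : MTree} (hβ : β < α) :
    RC (.and (.dia α (MTree.node Δ Γ).toFormula) (.dia β S.toFormula))
      (.dia α (MTree.node Δ (Γ ++ [(β, S)])).toFormula) := by
  refine .cut (.jax _ _ hβ) (.dist α (.andI (.cut (.andE₁ _ _) (.andE₁ _ _)) (diamL_intro ?_)))
  intro x hx
  rcases List.mem_append.1 hx with hx | hx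
  · exact .cut (.andE₁ _ _) (.cut (.andE₂ _ _) (diamL_of_mem hx))
  · rw [List.mem_singleton.1 hx]
    exact .andE₂ _ _

theorem RC.of_rootStep {r : Rule} {T T' : MTree} (h : RootStep r T T') :
    RC T.toFormula T'.toFormula := by
  cases h with
  | rhoP _ hp =>
    exact toFormula_node (List.cons_subset.2 ⟨List.mem_of_getElem? hp, List.Subset.refl _⟩)
      fun _ => diamL_of_mem
  | rhoM => exact toFormula_node List.eraseIdx_subset fun _ => diamL_of_mem
  | sigma _ _ _ hx hy =>
    refine toFormula_node (List.Subset.refl _) fun z hz => ?_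
    rcases List.mem_or_eq_of_mem_set hz with hz | rfl
    · exact diamL_of_mem_set (diamL_of_mem (List.mem_of_getElem? hx)) hz
    · exact diamL_of_mem (List.mem_of_getElem? hy)
  | piP _ hx =>
    exact toFormula_node (List.Subset.refl _) fun z hz => (List.mem_cons.1 hz).elim
      (fun h => h ▸ diamL_of_mem (List.mem_of_getElem? hx)) diamL_of_mem
  | piM =>
    exact toFormula_node (List.Subset.refl _) fun _ hz => diamL_of_mem (List.eraseIdx_subset hz)
  | four _ _ hΓ hΓt =>
    exact toFormula_node (List.Subset.refl _) fun _ => diamL_of_mem_set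
      (.cut (diamL_of_mem (List.mem_of_getElem? hΓ)) (dia_node_trans (List.mem_of_getElem? hΓt)))
  | lam _ hβ hΓ =>
    exact toFormula_node (List.Subset.refl _) fun _ => diamL_of_mem_set
      (.cut (diamL_of_mem (List.mem_of_getElem? hΓ)) (.mono _ hβ))
  | @jay _ _ _ _ α β Δt Γt S _ _ _ hβ hΓi hΓj =>
    exact toFormula_node (List.Subset.refl _) fun _ hz => diamL_of_mem_set
      (y := (α, .node Δt (Γt ++ [(β, S)])))
      (.cut (.andI (diamL_of_mem (List.mem_of_getElem? hΓi))
        (diamL_of_mem (List.mem_of_getElem? hΓj))) (dia_node_jax hβ))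
      (List.eraseIdx_subset hz)

mutual
theorem RC.toFormula_replace : ∀ (T : MTree) (k : List ℕ) (S : MTree), T.IsPos k →
    RC (T.subtree k).toFormula S.toFormula → RC T.toFormula (T.replace S k).toFormula
  | _, [], _, _, h => by simpa only [MTree.subtree, MTree.replace] using h
  | .node _ Γ, i :: k, S, hk, h => and_congr (.id _) (diamL_replaceL _ Γ i k S hk h)

theorem RC.diamL_replaceL : ∀ (d : MTree) (Γ : List (ℕ × MTree)) (i : ℕ) (k : List ℕ)
    (S : MTree), isPosL Γ i k →
    RC (subtreeL d Γ i k).toFormula S.toFormula → RC (diamL Γ) (diamL (replaceL Γ S i k))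
  | _, [], _, _, _, hk, _ | _, _ :: _, 0, _, _, hk, _ => hk.elim
  | _, (α, C) :: _, 1, k, S, hk, h => and_congr (.dist α (toFormula_replace C k S hk h)) (.id _)
  | d, _ :: Γ, n + 2, k, S, hk, h => and_congr (.id _) (diamL_replaceL d Γ (n + 1) k S hk h)
end

end TRC

/-- one-step adequacy: if `T ↪ T'` then `ℱ(T) ⊢_{RC} ℱ(T')`. -/
theorem adequacy_step (T T' : TRC.MTree) (h : TRC.Step T T') :
    TRC.RC T.toFormula T'.toFormula := by
  obtain ⟨r, k, S, hk, hroot, rfl⟩ := h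
  exact TRC.RC.toFormula_replace T k S hk (TRC.RC.of_rootStep hroot)
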